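/- Let w : Π' → 𝕂 be a partial integral of the completely solvable total differential system dx = X(t,x)dt, i.e. X_j w = Φ_j with Φ_j vanishing on {w = 0}, where Φ_j are continuous. If x : T → 𝕂ⁿ is a solution of the system with (t, x(t)) ∈ Π' for all t ∈ T and w(t₀, x(t₀)) = 0 for some t₀, then w(t, x(t)) = 0 for all t ∈ T (assuming T connected and a Lipschitz-type condition for Φ_j along {w=0} guaranteeing uniqueness of the zero solution of the derived ODE). -/

import Mathlib

/-!
Along the solution, `v t = w (t, x t)` has partial derivatives `∂_j v = Φ_j (t, x t)`, so the
Lipschitz-type bound gives `‖Dv‖ ≤ m K |v|` on `T`. On a segment in `T`, `v` then satisfies a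
linear differential inequality and Grönwall's inequality propagates a zero along it. Hence the
zero set of `v` is open in `T`, as is its complement, and `T` is connected.
-/

section
variable {m n : ℕ}

/-- Partial derivative in the `t_j` direction, for a function on
`(Fin m → ℝ) × (Fin n → ℝ)`. -/
noncomputable def pdt (j : Fin m) (f : (Fin m → ℝ) × (Fin n → ℝ) → ℝ)
    (p : (Fin m → ℝ) × (Fin n → ℝ)) : ℝ :=
  fderiv ℝ f p (Pi.single j 1, 0)

/-- Partial derivative in the `x_i` direction. -/
noncomputable def pdx (i : Fin n) (f : (Fin m → ℝ) × (Fin n → ℝ) → ℝ)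
    (p : (Fin m → ℝ) × (Fin n → ℝ)) : ℝ :=
  fderiv ℝ f p (0, Pi.single i 1)

open Set

section

variable {E F : Type*} [NormedAddCommGroup E] [NormedSpace ℝ E]
  [NormedAddCommGroup F] [NormedSpace ℝ F]

theorem eq_zero_of_norm_fderiv_le_mul_norm_on_segment {v : E → F} {a b : E} {C : ℝ}
    (hv : ∀ t ∈ segment ℝ a b, DifferentiableAt ℝ v t)
    (hbound : ∀ t ∈ segment ℝ a b, ‖fderiv ℝ v t‖ ≤ C * ‖v t‖) (ha : v a = 0) :
    v b = 0 := by
  have hγ : ∀ s ∈ Icc (0 : ℝ) 1, AffineMap.lineMap a b s ∈ segment ℝ a b := fun s hs => by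
    rw [segment_eq_image_lineMap]; exact mem_image_of_mem _ hs
  have hderiv : ∀ s ∈ Icc (0 : ℝ) 1, HasDerivAt (v ∘ AffineMap.lineMap a b)
      (fderiv ℝ v (AffineMap.lineMap a b s) (b - a)) s := fun s hs =>
    (hv _ (hγ s hs)).hasFDerivAt.comp_hasDerivAt s AffineMap.hasDerivAt_lineMap
  have hzero := eq_zero_of_abs_deriv_le_mul_abs_self_of_eq_zero_right (K := C * ‖b - a‖)
    (fun s hs => (hderiv s hs).continuousAt.continuousWithinAt)
    (fun s hs => (hderiv s (Ico_subset_Icc_self hs)).hasDerivWithinAt)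
    (by simpa using ha) (fun s hs => ?_) 1 (right_mem_Icc.2 zero_le_one)
  · simpa using hzero
  · have hs' := hγ s (Ico_subset_Icc_self hs)
    calc ‖fderiv ℝ v (AffineMap.lineMap a b s) (b - a)‖
        ≤ ‖fderiv ℝ v (AffineMap.lineMap a b s)‖ * ‖b - a‖ := ContinuousLinearMap.le_opNorm _ _
      _ ≤ C * ‖v (AffineMap.lineMap a b s)‖ * ‖b - a‖ :=
          mul_le_mul_of_nonneg_right (hbound _ hs') (norm_nonneg _)
      _ = C * ‖b - a‖ * ‖(v ∘ AffineMap.lineMap a b) s‖ := by simp only [Function.comp]; ring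

theorem IsPreconnected.eq_zero_of_norm_fderiv_le_mul_norm {v : E → F} {T : Set E} {C : ℝ}
    (hTc : IsPreconnected T) (hT : IsOpen T) (hv : DifferentiableOn ℝ v T)
    (hbound : ∀ t ∈ T, ‖fderiv ℝ v t‖ ≤ C * ‖v t‖) {t₀ : E} (ht₀ : t₀ ∈ T) (h0 : v t₀ = 0) :
    ∀ t ∈ T, v t = 0 := by
  have hzero_open : IsOpen {t | t ∈ T ∧ v t = 0} := by
    refine Metric.isOpen_iff.2 fun t₁ ⟨ht₁, hv₁⟩ => ?_
    obtain ⟨r, hr, hball⟩ := Metric.isOpen_iff.1 hT t₁ ht₁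
    refine ⟨r, hr, fun t₂ ht₂ => ⟨hball ht₂, ?_⟩⟩
    have hseg := (convex_ball t₁ r).segment_subset (Metric.mem_ball_self hr) ht₂
    exact eq_zero_of_norm_fderiv_le_mul_norm_on_segment
      (fun t ht => hv.differentiableAt (hT.mem_nhds (hball (hseg ht))))
      (fun t ht => hbound t (hball (hseg ht))) hv₁
  have hne_open : IsOpen (T ∩ v ⁻¹' {0}ᶜ) :=
    hv.continuousOn.isOpen_inter_preimage hT isOpen_compl_singleton
  have hsub := hTc.subset_left_of_subset_union hzero_open hne_open
    (disjoint_left.2 fun t ht ht' => ht'.2 ht.2)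
    (fun t ht => (em (v t = 0)).imp (fun h => ⟨ht, h⟩) fun h => ⟨ht, h⟩) ⟨t₀, ht₀, ht₀, h0⟩
  exact fun t ht => (hsub ht).2

end

section

variable {𝕜 : Type*} [NontriviallyNormedField 𝕜] {ι : Type*} [Fintype ι] [DecidableEq ι]
  {F : Type*} [NormedAddCommGroup F] [NormedSpace 𝕜 F]

theorem ContinuousLinearMap.apply_eq_sum_smul_apply_single (L : (ι → 𝕜) →L[𝕜] F) (d : ι → 𝕜) :
    L d = ∑ i, d i • L (Pi.single i 1) := by
  conv_lhs => rw [pi_eq_sum_univ' d]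
  simp only [map_sum, map_smul]

theorem ContinuousLinearMap.norm_le_sum_norm_apply_single (L : (ι → 𝕜) →L[𝕜] F) :
    ‖L‖ ≤ ∑ i, ‖L (Pi.single i 1)‖ := by
  refine L.opNorm_le_bound (Finset.sum_nonneg fun i _ => norm_nonneg _) fun d => ?_
  calc ‖L d‖ ≤ ∑ i, ‖d i‖ * ‖L (Pi.single i 1)‖ := by
        rw [L.apply_eq_sum_smul_apply_single d]
        exact (norm_sum_le _ _).trans_eq (by simp only [norm_smul])
    _ ≤ ∑ i, ‖d‖ * ‖L (Pi.single i 1)‖ := by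
        gcongr with i; exact norm_le_pi_norm d i
    _ = (∑ i, ‖L (Pi.single i 1)‖) * ‖d‖ := by rw [← Finset.mul_sum, mul_comm]

end

theorem fderiv_graph_apply_single {w : (Fin m → ℝ) × (Fin n → ℝ) → ℝ}
    {x : (Fin m → ℝ) → Fin n → ℝ} {t : Fin m → ℝ} (hw : DifferentiableAt ℝ w (t, x t))
    (hx : DifferentiableAt ℝ x t) (j : Fin m) :
    fderiv ℝ (fun t => w (t, x t)) t (Pi.single j 1) =
      pdt j w (t, x t) + ∑ i, fderiv ℝ x t (Pi.single j 1) i * pdx i w (t, x t) := by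
  have hgraph : HasFDerivAt (fun t => w (t, x t)) ((fderiv ℝ w (t, x t)).comp
      ((ContinuousLinearMap.id ℝ _).prod (fderiv ℝ x t))) t :=
    hw.hasFDerivAt.comp t ((hasFDerivAt_id t).prodMk hx.hasFDerivAt)
  set L := fderiv ℝ w (t, x t)
  set y := fderiv ℝ x t (Pi.single j 1)
  calc fderiv ℝ (fun t => w (t, x t)) t (Pi.single j 1) = L (Pi.single j 1, 0) + L (0, y) := by
        rw [hgraph.fderiv, ← map_add]; simp [y]
    _ = pdt j w (t, x t) + ∑ i, y i * pdx i w (t, x t) := by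
        rw [show L (0, y) = (L.comp (.inr ℝ _ _)) y from rfl,
          ContinuousLinearMap.apply_eq_sum_smul_apply_single]
        rfl

theorem stmt19_general (Xm : Fin n → Fin m → ((Fin m → ℝ) × (Fin n → ℝ) → ℝ))
    (w : (Fin m → ℝ) × (Fin n → ℝ) → ℝ) (hw : Differentiable ℝ w)
    (Φ : Fin m → ((Fin m → ℝ) × (Fin n → ℝ) → ℝ))
    (Pi' : Set ((Fin m → ℝ) × (Fin n → ℝ)))
    (hpi : ∀ j : Fin m, ∀ p ∈ Pi',
      pdt j w p + ∑ i : Fin n, Xm i j p * pdx i w p = Φ j p)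
    (T : Set (Fin m → ℝ)) (hT : IsOpen T) (hTconn : IsPreconnected T)
    (x : (Fin m → ℝ) → (Fin n → ℝ)) (hx : Differentiable ℝ x)
    (hmem : ∀ t ∈ T, (t, x t) ∈ Pi')
    (hsol : ∀ t ∈ T, ∀ j : Fin m,
      fderiv ℝ x t (Pi.single j 1) = fun i => Xm i j (t, x t))
    (K : ℝ)
    (hlip : ∀ j : Fin m, ∀ t ∈ T, |Φ j (t, x t)| ≤ K * |w (t, x t)|)
    (t₀ : Fin m → ℝ) (ht₀ : t₀ ∈ T) (hw0 : w (t₀, x t₀) = 0) :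
    ∀ t ∈ T, w (t, x t) = 0 := by
  set v : (Fin m → ℝ) → ℝ := fun t => w (t, x t)
  have hv : Differentiable ℝ v := fun t => (hw _).comp t (differentiableAt_id.prodMk (hx t))
  have hdir : ∀ t ∈ T, ∀ j, fderiv ℝ v t (Pi.single j 1) = Φ j (t, x t) := fun t ht j => by
    rw [fderiv_graph_apply_single (hw _) (hx t), hsol t ht j, hpi j _ (hmem t ht)]
  have hbound : ∀ t ∈ T, ‖fderiv ℝ v t‖ ≤ (m * K) * ‖v t‖ := fun t ht =>
    calc ‖fderiv ℝ v t‖ ≤ ∑ j, ‖fderiv ℝ v t (Pi.single j 1)‖ :=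
          (fderiv ℝ v t).norm_le_sum_norm_apply_single
      _ ≤ ∑ _j : Fin m, K * ‖v t‖ := Finset.sum_le_sum fun j _ => by
          rw [hdir t ht j]; exact hlip j t ht
      _ = (m * K) * ‖v t‖ := by simp [mul_assoc]
  exact hTconn.eq_zero_of_norm_fderiv_le_mul_norm hT hv.differentiableOn hbound ht₀ hw0

/-- The zero set of a partial integral `w` of a completely solvable total differential
system is invariant: if `X_j w = Φ_j` on `Π'` with `Φ_j` vanishing on `{w = 0}` and
satisfying a Lipschitz-type bound `|Φ_j| ≤ K·|w|` along a solution `x(t)` of the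
system lying in `Π'`, and `w(t₀, x(t₀)) = 0` at some `t₀` of the connected
domain `T`, then `w(t, x(t)) = 0` for all `t ∈ T`. -/
theorem stmt19 (Xm : Fin n → Fin m → ((Fin m → ℝ) × (Fin n → ℝ) → ℝ))
    (w : (Fin m → ℝ) × (Fin n → ℝ) → ℝ) (hw : Differentiable ℝ w)
    (Φ : Fin m → ((Fin m → ℝ) × (Fin n → ℝ) → ℝ)) (hΦ : ∀ j, Continuous (Φ j))
    (Pi' : Set ((Fin m → ℝ) × (Fin n → ℝ)))
    (hpi : ∀ j : Fin m, ∀ p ∈ Pi',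
      pdt j w p + ∑ i : Fin n, Xm i j p * pdx i w p = Φ j p)
    (hΦ0 : ∀ j : Fin m, ∀ p ∈ Pi', w p = 0 → Φ j p = 0)
    (T : Set (Fin m → ℝ)) (hT : IsOpen T) (hTconn : IsPreconnected T)
    (x : (Fin m → ℝ) → (Fin n → ℝ)) (hx : Differentiable ℝ x)
    (hmem : ∀ t ∈ T, (t, x t) ∈ Pi')
    (hsol : ∀ t ∈ T, ∀ j : Fin m,
      fderiv ℝ x t (Pi.single j 1) = fun i => Xm i j (t, x t))
    (K : ℝ)
    (hlip : ∀ j : Fin m, ∀ t ∈ T, |Φ j (t, x t)| ≤ K * |w (t, x t)|)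
    (t₀ : Fin m → ℝ) (ht₀ : t₀ ∈ T) (hw0 : w (t₀, x t₀) = 0) :
    ∀ t ∈ T, w (t, x t) = 0 :=
  stmt19_general Xm w hw Φ Pi' hpi T hT hTconn x hx hmem hsol K hlip t₀ ht₀ hw0

end
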